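/- arXiv:1207.4511 — 6 statements merged into one kernel-verified Lean document; each statement's English description precedes it below -/
import Mathlib

section
/- A Banach algebra A is approximately amenable (every continuous derivation into a dual bimodule is approximately inner) if and only if its unitization A♯ is approximately amenable. -/
open Filter Topology TensorProduct

noncomputable section


open Filter Topology TensorProduct


/-! Banach bimodules and derivations -/

variable (A : Type) [NonUnitalNormedRing A] [NormedSpace ℂ A]
  [IsScalarTower ℂ A A] [SMulCommClass ℂ A A]

/-- A Banach `A`-bimodule structure on a Banach space `X`: `l a` is the left action of `a`,
`r a` is the right action of `a`. -/
structure BanachBimod (X : Type) [NormedAddCommGroup X] [NormedSpace ℂ X] where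
  l : A → X →L[ℂ] X
  r : A → X →L[ℂ] X
  l_add : ∀ a b, l (a + b) = l a + l b
  l_smul : ∀ (c : ℂ) a, l (c • a) = c • l a
  r_add : ∀ a b, r (a + b) = r a + r b
  r_smul : ∀ (c : ℂ) a, r (c • a) = c • r a
  l_bound : ∃ C : ℝ, ∀ a, ‖l a‖ ≤ C * ‖a‖
  r_bound : ∃ C : ℝ, ∀ a, ‖r a‖ ≤ C * ‖a‖
  l_mul : ∀ a b, l (a * b) = (l a).comp (l b)
  r_mul : ∀ a b, r (a * b) = (r b).comp (r a)
  lr_comm : ∀ a b, (l a).comp (r b) = (r b).comp (l a)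

variable {A}

namespace BanachBimod

variable {X : Type} [NormedAddCommGroup X] [NormedSpace ℂ X]

/-- The dual bimodule structure on `X →L[ℂ] ℂ`. -/
def dual (M : BanachBimod A X) : BanachBimod A (X →L[ℂ] ℂ) where
  l a := (ContinuousLinearMap.compL ℂ X X ℂ).flip (M.r a)
  r a := (ContinuousLinearMap.compL ℂ X X ℂ).flip (M.l a)
  l_add a b := by simp only [M.r_add, map_add]
  l_smul c a := by simp only [M.r_smul, map_smul]
  r_add a b := by simp only [M.l_add, map_add]
  r_smul c a := by simp only [M.l_smul, map_smul]
  l_bound := by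
    obtain ⟨C, hC⟩ := M.r_bound
    refine ⟨‖(ContinuousLinearMap.compL ℂ X X ℂ).flip‖ * C, fun a => ?_⟩
    calc ‖(ContinuousLinearMap.compL ℂ X X ℂ).flip (M.r a)‖
        ≤ ‖(ContinuousLinearMap.compL ℂ X X ℂ).flip‖ * ‖M.r a‖ :=
          (ContinuousLinearMap.compL ℂ X X ℂ).flip.le_opNorm _
      _ ≤ ‖(ContinuousLinearMap.compL ℂ X X ℂ).flip‖ * (C * ‖a‖) := by
          exact mul_le_mul_of_nonneg_left (hC a) (norm_nonneg _)
      _ = ‖(ContinuousLinearMap.compL ℂ X X ℂ).flip‖ * C * ‖a‖ := by ring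
  r_bound := by
    obtain ⟨C, hC⟩ := M.l_bound
    refine ⟨‖(ContinuousLinearMap.compL ℂ X X ℂ).flip‖ * C, fun a => ?_⟩
    calc ‖(ContinuousLinearMap.compL ℂ X X ℂ).flip (M.l a)‖
        ≤ ‖(ContinuousLinearMap.compL ℂ X X ℂ).flip‖ * ‖M.l a‖ :=
          (ContinuousLinearMap.compL ℂ X X ℂ).flip.le_opNorm _
      _ ≤ ‖(ContinuousLinearMap.compL ℂ X X ℂ).flip‖ * (C * ‖a‖) := by
          exact mul_le_mul_of_nonneg_left (hC a) (norm_nonneg _)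
      _ = ‖(ContinuousLinearMap.compL ℂ X X ℂ).flip‖ * C * ‖a‖ := by ring
  l_mul a b := by
    ext φ x
    simp [M.r_mul]
  r_mul a b := by
    ext φ x
    simp [M.l_mul]
  lr_comm a b := by
    ext φ x
    simpa using congrArg φ (congrFun (congrArg DFunLike.coe (M.lr_comm b a)) x)

/-- A continuous derivation from `A` into the bimodule `X`. -/
def IsDerivation (M : BanachBimod A X) (D : A →L[ℂ] X) : Prop :=
  ∀ a b, D (a * b) = M.l a (D b) + M.r b (D a)

/-- `D` is inner. -/
def Inner (M : BanachBimod A X) (D : A →L[ℂ] X) : Prop :=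
  ∃ x : X, ∀ a, D a = M.l a x - M.r a x

/-- `D` is approximately inner: some net of inner derivations converges to `D` pointwise
in norm. -/
def ApproxInner (M : BanachBimod A X) (D : A →L[ℂ] X) : Prop :=
  ∃ (ι : Type) (φ : Filter ι) (x : ι → X), φ.NeBot ∧
    ∀ a, Tendsto (fun i => M.l a (x i) - M.r a (x i)) φ (𝓝 (D a))

/-- `D` is sequentially approximately inner. -/
def SeqApproxInner (M : BanachBimod A X) (D : A →L[ℂ] X) : Prop :=
  ∃ x : ℕ → X, ∀ a, Tendsto (fun n => M.l a (x n) - M.r a (x n)) atTop (𝓝 (D a))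

/-- `D` is boundedly approximately inner: the approximating net of inner derivations is
bounded as a net of operators from `A` to `X`. -/
def BddApproxInner (M : BanachBimod A X) (D : A →L[ℂ] X) : Prop :=
  ∃ (ι : Type) (φ : Filter ι) (x : ι → X), φ.NeBot ∧
    (∃ C : ℝ, ∀ i a, ‖M.l a (x i) - M.r a (x i)‖ ≤ C * ‖a‖) ∧
    ∀ a, Tendsto (fun i => M.l a (x i) - M.r a (x i)) φ (𝓝 (D a))

/-- `D` is uniformly approximately inner: inner derivations approximate `D` uniformly
on the unit ball of `A`, i.e. in operator norm. -/
def UnifApproxInner (M : BanachBimod A X) (D : A →L[ℂ] X) : Prop :=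
  ∃ (ι : Type) (φ : Filter ι) (x : ι → X), φ.NeBot ∧
    ∀ ε > (0 : ℝ), ∀ᶠ i in φ, ∀ a, ‖D a - (M.l a (x i) - M.r a (x i))‖ ≤ ε * ‖a‖

/-- A derivation into the dual module `X →L[ℂ] ℂ` is weak* approximately inner. -/
def WeakStarApproxInner (M : BanachBimod A X) (D : A →L[ℂ] (X →L[ℂ] ℂ)) : Prop :=
  ∃ (ι : Type) (φ : Filter ι) (x : ι → (X →L[ℂ] ℂ)), φ.NeBot ∧
    ∀ (a : A) (ξ : X),
      Tendsto (fun i => (M.dual.l a (x i) - M.dual.r a (x i)) ξ) φ (𝓝 (D a ξ))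

end BanachBimod

variable (A)

/-- `A` is contractible: every continuous derivation into every Banach `A`-bimodule is inner. -/
def Contractible : Prop :=
  ∀ (X : Type) (_ : NormedAddCommGroup X) (_ : NormedSpace ℂ X) (M : BanachBimod A X)
    (D : A →L[ℂ] X), M.IsDerivation D → M.Inner D

def ApproximatelyContractible : Prop :=
  ∀ (X : Type) (_ : NormedAddCommGroup X) (_ : NormedSpace ℂ X) (M : BanachBimod A X)
    (D : A →L[ℂ] X), M.IsDerivation D → M.ApproxInner D

def SeqApproximatelyContractible : Prop :=
  ∀ (X : Type) (_ : NormedAddCommGroup X) (_ : NormedSpace ℂ X) (M : BanachBimod A X)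
    (D : A →L[ℂ] X), M.IsDerivation D → M.SeqApproxInner D

def UnifApproximatelyContractible : Prop :=
  ∀ (X : Type) (_ : NormedAddCommGroup X) (_ : NormedSpace ℂ X) (M : BanachBimod A X)
    (D : A →L[ℂ] X), M.IsDerivation D → M.UnifApproxInner D

def ApproximatelyAmenable : Prop :=
  ∀ (X : Type) (_ : NormedAddCommGroup X) (_ : NormedSpace ℂ X) (M : BanachBimod A X)
    (D : A →L[ℂ] (X →L[ℂ] ℂ)), M.dual.IsDerivation D → M.dual.ApproxInner D

def SeqApproximatelyAmenable : Prop :=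
  ∀ (X : Type) (_ : NormedAddCommGroup X) (_ : NormedSpace ℂ X) (M : BanachBimod A X)
    (D : A →L[ℂ] (X →L[ℂ] ℂ)), M.dual.IsDerivation D → M.dual.SeqApproxInner D

def BddApproximatelyAmenable : Prop :=
  ∀ (X : Type) (_ : NormedAddCommGroup X) (_ : NormedSpace ℂ X) (M : BanachBimod A X)
    (D : A →L[ℂ] (X →L[ℂ] ℂ)), M.dual.IsDerivation D → M.dual.BddApproxInner D

def WeakStarApproximatelyAmenable : Prop :=
  ∀ (X : Type) (_ : NormedAddCommGroup X) (_ : NormedSpace ℂ X) (M : BanachBimod A X)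
    (D : A →L[ℂ] (X →L[ℂ] ℂ)), M.dual.IsDerivation D → M.WeakStarApproxInner D


/-- The projective tensor "seminorm" on the algebraic tensor product `V ⊗[ℂ] W`, relative to
given (semi)norm functions on the factors: the infimum of `∑ να aₙ * νβ bₙ` over all
representations `t = ∑ aₙ ⊗ bₙ`. -/
def projTensorSN {V W : Type} [AddCommGroup V] [Module ℂ V] [AddCommGroup W] [Module ℂ W]
    (να : V → ℝ) (νβ : W → ℝ) (t : V ⊗[ℂ] W) : ℝ :=
  sInf {r : ℝ | ∃ L : List (V × W), t = (L.map fun p => p.1 ⊗ₜ[ℂ] p.2).sum ∧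
      r = (L.map fun p => να p.1 * νβ p.2).sum}

section SN

variable (C : Type) [NonUnitalRing C] [Module ℂ C] [IsScalarTower ℂ C C] [SMulCommClass ℂ C C]

/-- The left action `u ↦ a·u` of `C` on `C ⊗[ℂ] C`. -/
def tactL (a : C) : C ⊗[ℂ] C →ₗ[ℂ] C ⊗[ℂ] C :=
  TensorProduct.map (LinearMap.mulLeft ℂ a) LinearMap.id

/-- The right action `u ↦ u·a` of `C` on `C ⊗[ℂ] C`. -/
def tactR (a : C) : C ⊗[ℂ] C →ₗ[ℂ] C ⊗[ℂ] C :=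
  TensorProduct.map LinearMap.id (LinearMap.mulRight ℂ a)

/-- The multiplication map `π : C ⊗ C → C`. -/
def tpi : C ⊗[ℂ] C →ₗ[ℂ] C := LinearMap.mul' ℂ C

variable (ν : C → ℝ)

/-- Pseudo-amenability of the algebra `C` relative to the (semi)norm function `ν`:
there is an approximate diagonal, i.e. a net `(u_i) ⊂ C ⊗̂ C` with
`a·u_i − u_i·a → 0` (in the projective tensor seminorm) and `π(u_i)a → a` for all `a ∈ C`. -/
def PseudoAmenableSN : Prop :=
  ∃ (ι : Type) (φ : Filter ι) (u : ι → C ⊗[ℂ] C), φ.NeBot ∧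
    (∀ a : C, Tendsto (fun i => projTensorSN ν ν (tactL C a (u i) - tactR C a (u i))) φ (𝓝 0)) ∧
    (∀ a : C, Tendsto (fun i => ν (tpi C (u i) * a - a)) φ (𝓝 0))

/-- Sequential pseudo-amenability. -/
def SeqPseudoAmenableSN : Prop :=
  ∃ u : ℕ → C ⊗[ℂ] C,
    (∀ a : C, Tendsto (fun n => projTensorSN ν ν (tactL C a (u n) - tactR C a (u n))) atTop (𝓝 0)) ∧
    (∀ a : C, Tendsto (fun n => ν (tpi C (u n) * a - a)) atTop (𝓝 0))

/-- Pseudo-contractibility: there is a central approximate diagonal. -/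
def PseudoContractibleSN : Prop :=
  ∃ (ι : Type) (φ : Filter ι) (u : ι → C ⊗[ℂ] C), φ.NeBot ∧
    (∀ (a : C) i, tactL C a (u i) = tactR C a (u i)) ∧
    (∀ a : C, Tendsto (fun i => ν (tpi C (u i) * a - a)) φ (𝓝 0))

/-- Bounded pseudo-contractibility: a central approximate diagonal `(u_i)` such that
`(π(u_i))` is a multiplier-bounded approximate identity. -/
def BddPseudoContractibleSN : Prop :=
  ∃ (ι : Type) (φ : Filter ι) (u : ι → C ⊗[ℂ] C), φ.NeBot ∧
    (∀ (a : C) i, tactL C a (u i) = tactR C a (u i)) ∧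
    (∀ a : C, Tendsto (fun i => ν (tpi C (u i) * a - a)) φ (𝓝 0)) ∧
    (∃ K : ℝ, 0 < K ∧ ∀ i (a : C), ν (tpi C (u i) * a) ≤ K * ν a)

end SN

section Normed

variable (A : Type) [NonUnitalNormedRing A] [NormedSpace ℂ A]
  [IsScalarTower ℂ A A] [SMulCommClass ℂ A A]

def PseudoAmenable : Prop := PseudoAmenableSN A (fun a => ‖a‖)
def SeqPseudoAmenable : Prop := SeqPseudoAmenableSN A (fun a => ‖a‖)
def PseudoContractible : Prop := PseudoContractibleSN A (fun a => ‖a‖)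
def BddPseudoContractible : Prop := BddPseudoContractibleSN A (fun a => ‖a‖)

/-- `A` has a (two-sided) approximate identity. -/
def HasApproxIdentity : Prop :=
  ∃ (ι : Type) (φ : Filter ι) (e : ι → A), φ.NeBot ∧
    ∀ a : A, Tendsto (fun i => e i * a) φ (𝓝 a) ∧ Tendsto (fun i => a * e i) φ (𝓝 a)

/-- `A` has a bounded (two-sided) approximate identity. -/
def HasBoundedApproxIdentity : Prop :=
  ∃ (ι : Type) (φ : Filter ι) (e : ι → A), φ.NeBot ∧ (∃ C : ℝ, ∀ i, ‖e i‖ ≤ C) ∧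
    ∀ a : A, Tendsto (fun i => e i * a) φ (𝓝 a) ∧ Tendsto (fun i => a * e i) φ (𝓝 a)

/-- `A` has a left approximate identity. -/
def HasLeftApproxIdentity : Prop :=
  ∃ (ι : Type) (φ : Filter ι) (e : ι → A), φ.NeBot ∧
    ∀ a : A, Tendsto (fun i => e i * a) φ (𝓝 a)

/-- `A` has a right approximate identity. -/
def HasRightApproxIdentity : Prop :=
  ∃ (ι : Type) (φ : Filter ι) (e : ι → A), φ.NeBot ∧
    ∀ a : A, Tendsto (fun i => a * e i) φ (𝓝 a)

/-- `A` has a central approximate identity. -/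
def HasCentralApproxIdentity : Prop :=
  ∃ (ι : Type) (φ : Filter ι) (e : ι → A), φ.NeBot ∧
    (∀ (a : A) i, a * e i = e i * a) ∧
    ∀ a : A, Tendsto (fun i => e i * a) φ (𝓝 a)

/-- `A` is approximately biprojective: there is a net `(T_α)` of bounded `A`-bimodule morphisms
`A → A ⊗̂ A` with `π ∘ T_α (a) → a` for every `a`. -/
def ApproxBiprojective : Prop :=
  ∃ (ι : Type) (φ : Filter ι) (T : ι → (A →ₗ[ℂ] A ⊗[ℂ] A)), φ.NeBot ∧
    (∀ i, ∃ C : ℝ, ∀ a, projTensorSN (fun x : A => ‖x‖) (fun x : A => ‖x‖) (T i a) ≤ C * ‖a‖) ∧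
    (∀ i (a b : A), T i (a * b) = tactL A a (T i b) ∧ T i (a * b) = tactR A b (T i a)) ∧
    (∀ a : A, Tendsto (fun i => tpi A (T i a)) φ (𝓝 a))

end Normed


end

noncomputable section

variable (A : Type) [NonUnitalNormedRing A] [NormedSpace ℂ A]
  [IsScalarTower ℂ A A] [SMulCommClass ℂ A A]

/-- The ℓ¹-norm on the unitization `A♯ = A ⊕ ℂe` : `‖a + λe‖ = ‖λ‖ + ‖a‖`. -/
instance unitizationNormedAddCommGroup : NormedAddCommGroup (Unitization ℂ A) :=
  AddGroupNorm.toNormedAddCommGroup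
    { toFun := fun x => ‖x.fst‖ + ‖x.snd‖
      map_zero' := by simp
      add_le' := fun x y => by
        simp only [Unitization.fst_add, Unitization.snd_add]
        calc ‖x.fst + y.fst‖ + ‖x.snd + y.snd‖
            ≤ (‖x.fst‖ + ‖y.fst‖) + (‖x.snd‖ + ‖y.snd‖) :=
              add_le_add (norm_add_le _ _) (norm_add_le _ _)
          _ = ‖x.fst‖ + ‖x.snd‖ + (‖y.fst‖ + ‖y.snd‖) := by ring
      neg' := fun x => by simp
      eq_zero_of_map_eq_zero' := fun x h => by
        have h' : ‖x.fst‖ + ‖x.snd‖ = 0 := h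
        have h1 : ‖x.fst‖ = 0 := by
          nlinarith [norm_nonneg x.fst, norm_nonneg x.snd]
        have h2 : ‖x.snd‖ = 0 := by
          nlinarith [norm_nonneg x.fst, norm_nonneg x.snd]
        exact Unitization.ext (norm_eq_zero.mp h1) (norm_eq_zero.mp h2) }

instance unitizationNormedRing : NormedRing (Unitization ℂ A) :=
  { unitizationNormedAddCommGroup A, (inferInstance : Ring (Unitization ℂ A)) with
    dist_eq := fun x y => rfl
    norm_mul_le := fun x y => by
      show ‖(x * y).fst‖ + ‖(x * y).snd‖ ≤ (‖x.fst‖ + ‖x.snd‖) * (‖y.fst‖ + ‖y.snd‖)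
      rw [Unitization.fst_mul, Unitization.snd_mul]
      have h1 : ‖x.fst * y.fst‖ ≤ ‖x.fst‖ * ‖y.fst‖ := norm_mul_le _ _
      have h2 : ‖x.fst • y.snd‖ = ‖x.fst‖ * ‖y.snd‖ := norm_smul _ _
      have h3 : ‖y.fst • x.snd‖ = ‖y.fst‖ * ‖x.snd‖ := norm_smul _ _
      have h4 : ‖x.snd * y.snd‖ ≤ ‖x.snd‖ * ‖y.snd‖ := norm_mul_le _ _
      have h5 : ‖x.fst • y.snd + y.fst • x.snd + x.snd * y.snd‖
          ≤ ‖x.fst • y.snd‖ + ‖y.fst • x.snd‖ + ‖x.snd * y.snd‖ := norm_add₃_le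
      nlinarith [norm_nonneg x.fst, norm_nonneg x.snd, norm_nonneg y.fst, norm_nonneg y.snd] }

instance unitizationNormedSpace : NormedSpace ℂ (Unitization ℂ A) where
  norm_smul_le c x := by
    show ‖(c • x).fst‖ + ‖(c • x).snd‖ ≤ ‖c‖ * (‖x.fst‖ + ‖x.snd‖)
    rw [Unitization.fst_smul, Unitization.snd_smul, norm_smul, norm_smul, mul_add]

section Aux

lemma norm_unitization_def (u : Unitization ℂ A) : ‖u‖ = ‖u.fst‖ + ‖u.snd‖ := rfl

lemma norm_unitization_inr (a : A) : ‖(a : Unitization ℂ A)‖ = ‖a‖ := by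
  rw [norm_unitization_def, Unitization.fst_inr, Unitization.snd_inr, norm_zero, zero_add]

variable {A}
variable {X : Type} [NormedAddCommGroup X] [NormedSpace ℂ X]

/-- Extend a Banach `A`-bimodule to a Banach `A♯`-bimodule. -/
def BanachBimod.unitize (M : BanachBimod A X) : BanachBimod (Unitization ℂ A) X where
  l u := M.l u.snd + u.fst • ContinuousLinearMap.id ℂ X
  r u := M.r u.snd + u.fst • ContinuousLinearMap.id ℂ X
  l_add u v := by
    simp only [Unitization.fst_add, Unitization.snd_add, M.l_add, add_smul]; abel
  l_smul c u := by
    simp only [Unitization.fst_smul, Unitization.snd_smul, M.l_smul, smul_eq_mul, mul_smul,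
      smul_add]
  r_add u v := by
    simp only [Unitization.fst_add, Unitization.snd_add, M.r_add, add_smul]; abel
  r_smul c u := by
    simp only [Unitization.fst_smul, Unitization.snd_smul, M.r_smul, smul_eq_mul, mul_smul,
      smul_add]
  l_bound := by
    obtain ⟨C, hC⟩ := M.l_bound
    refine ⟨max C 1, fun u => ?_⟩
    have h1 : ‖M.l u.snd + u.fst • ContinuousLinearMap.id ℂ X‖
        ≤ ‖M.l u.snd‖ + ‖u.fst‖ * ‖(ContinuousLinearMap.id ℂ X : X →L[ℂ] X)‖ := by
      rw [← norm_smul u.fst (ContinuousLinearMap.id ℂ X)]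
      exact norm_add_le _ _
    have h2 : ‖(ContinuousLinearMap.id ℂ X : X →L[ℂ] X)‖ ≤ 1 := ContinuousLinearMap.norm_id_le
    have h3 := hC u.snd
    have hC1 : C ≤ max C 1 := le_max_left _ _
    have h11 : (1:ℝ) ≤ max C 1 := le_max_right _ _
    rw [norm_unitization_def]
    nlinarith [norm_nonneg u.fst, norm_nonneg u.snd, norm_nonneg (M.l u.snd),
      norm_nonneg (ContinuousLinearMap.id ℂ X : X →L[ℂ] X)]
  r_bound := by
    obtain ⟨C, hC⟩ := M.r_bound
    refine ⟨max C 1, fun u => ?_⟩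
    have h1 : ‖M.r u.snd + u.fst • ContinuousLinearMap.id ℂ X‖
        ≤ ‖M.r u.snd‖ + ‖u.fst‖ * ‖(ContinuousLinearMap.id ℂ X : X →L[ℂ] X)‖ := by
      rw [← norm_smul u.fst (ContinuousLinearMap.id ℂ X)]
      exact norm_add_le _ _
    have h2 : ‖(ContinuousLinearMap.id ℂ X : X →L[ℂ] X)‖ ≤ 1 := ContinuousLinearMap.norm_id_le
    have h3 := hC u.snd
    have hC1 : C ≤ max C 1 := le_max_left _ _
    have h11 : (1:ℝ) ≤ max C 1 := le_max_right _ _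
    rw [norm_unitization_def]
    nlinarith [norm_nonneg u.fst, norm_nonneg u.snd, norm_nonneg (M.r u.snd),
      norm_nonneg (ContinuousLinearMap.id ℂ X : X →L[ℂ] X)]
  l_mul u v := by
    ext x
    simp only [Unitization.fst_mul, Unitization.snd_mul, M.l_add, M.l_smul, M.l_mul,
      ContinuousLinearMap.add_apply, ContinuousLinearMap.smul_apply,
      ContinuousLinearMap.comp_apply, ContinuousLinearMap.id_apply, ContinuousLinearMap.coe_id,
      ContinuousLinearMap.map_add, ContinuousLinearMap.map_smul, smul_eq_mul, mul_smul]
    module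
  r_mul u v := by
    ext x
    simp only [Unitization.fst_mul, Unitization.snd_mul, M.r_add, M.r_smul, M.r_mul,
      ContinuousLinearMap.add_apply, ContinuousLinearMap.smul_apply,
      ContinuousLinearMap.comp_apply, ContinuousLinearMap.id_apply, ContinuousLinearMap.coe_id,
      ContinuousLinearMap.map_add, ContinuousLinearMap.map_smul, smul_eq_mul, mul_smul]
    module
  lr_comm u v := by
    ext x
    simp only [ContinuousLinearMap.comp_apply, ContinuousLinearMap.add_apply,
      ContinuousLinearMap.smul_apply, ContinuousLinearMap.id_apply,
      ContinuousLinearMap.map_add, ContinuousLinearMap.map_smul]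
    have h := congrFun (congrArg DFunLike.coe (M.lr_comm u.snd v.snd)) x
    simp only [ContinuousLinearMap.comp_apply] at h
    rw [h]
    module

/-- Restrict a Banach `A♯`-bimodule to a Banach `A`-bimodule. -/
def BanachBimod.restrict (M : BanachBimod (Unitization ℂ A) X) : BanachBimod A X where
  l a := M.l a
  r a := M.r a
  l_add a b := by show M.l ↑(a + b) = _; rw [Unitization.inr_add, M.l_add]
  l_smul c a := by show M.l ↑(c • a) = _; rw [Unitization.inr_smul, M.l_smul]
  r_add a b := by show M.r ↑(a + b) = _; rw [Unitization.inr_add, M.r_add]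
  r_smul c a := by show M.r ↑(c • a) = _; rw [Unitization.inr_smul, M.r_smul]
  l_bound := by
    obtain ⟨C, hC⟩ := M.l_bound
    exact ⟨C, fun a => by simpa [norm_unitization_inr] using hC (a : Unitization ℂ A)⟩
  r_bound := by
    obtain ⟨C, hC⟩ := M.r_bound
    exact ⟨C, fun a => by simpa [norm_unitization_inr] using hC (a : Unitization ℂ A)⟩
  l_mul a b := by
    show M.l ↑(a * b) = (M.l ↑a).comp (M.l ↑b)
    rw [Unitization.inr_mul, M.l_mul]
  r_mul a b := by
    show M.r ↑(a * b) = (M.r ↑b).comp (M.r ↑a)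
    rw [Unitization.inr_mul, M.r_mul]
  lr_comm a b := M.lr_comm a b

variable (A)

/-- The inclusion `A → A♯` as a continuous linear map. -/
def inrCLM : A →L[ℂ] Unitization ℂ A :=
  { Unitization.inrHom ℂ ℂ A with
    cont := by
      have h : IsInducing (Unitization.addEquiv ℂ A) := ⟨rfl⟩
      exact h.continuous_iff.mpr (continuous_const.prodMk continuous_id) }

/-- The projection `A♯ → A` as a continuous linear map. -/
def sndCLM : Unitization ℂ A →L[ℂ] A :=
  { Unitization.sndHom ℂ ℂ A with
    cont := by
      have h : Continuous (Unitization.addEquiv ℂ A) := continuous_induced_dom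
      exact continuous_snd.comp h }

@[simp] lemma inrCLM_apply (a : A) : inrCLM A a = (a : Unitization ℂ A) := rfl
@[simp] lemma sndCLM_apply (u : Unitization ℂ A) : sndCLM A u = u.snd := rfl

end Aux

variable {A}
variable {X : Type} [NormedAddCommGroup X] [NormedSpace ℂ X]

lemma BanachBimod.dual_l_apply (M : BanachBimod A X) (a : A) (φ : X →L[ℂ] ℂ) :
    M.dual.l a φ = φ.comp (M.r a) := rfl

lemma BanachBimod.dual_r_apply (M : BanachBimod A X) (a : A) (φ : X →L[ℂ] ℂ) :
    M.dual.r a φ = φ.comp (M.l a) := rfl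

variable (A)

set_option maxHeartbeats 2000000 in
set_option synthInstance.maxHeartbeats 400000 in
/-- A Banach algebra `A` is approximately amenable if and only if its
unitization `A♯` is approximately amenable. -/
theorem approxAmenable_iff_unitization_approxAmenable [CompleteSpace A] :
    ApproximatelyAmenable A ↔ ApproximatelyAmenable (Unitization ℂ A) := by
  constructor
  · -- `A` approximately amenable implies `A♯` approximately amenable
    intro hA X iX1 iX2 M D hD
    letI : UniformSpace (Unitization ℂ A) := PseudoMetricSpace.toUniformSpace
    -- basic module identities for the dual actions
    have hLm : ∀ (u v : Unitization ℂ A) (φ : X →L[ℂ] ℂ),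
        M.dual.l (u * v) φ = M.dual.l u (M.dual.l v φ) := by
      intro u v φ; rw [M.dual.l_mul]; rfl
    have hRm : ∀ (u v : Unitization ℂ A) (φ : X →L[ℂ] ℂ),
        M.dual.r (u * v) φ = M.dual.r v (M.dual.r u φ) := by
      intro u v φ; rw [M.dual.r_mul]; rfl
    have hLR : ∀ (u v : Unitization ℂ A) (φ : X →L[ℂ] ℂ),
        M.dual.l u (M.dual.r v φ) = M.dual.r v (M.dual.l u φ) := by
      intro u v φ
      have h := congrFun (congrArg DFunLike.coe (M.dual.lr_comm u v)) φ
      simpa using h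
    have hL1 : ∀ (u : Unitization ℂ A) (φ : X →L[ℂ] ℂ),
        M.dual.l 1 (M.dual.l u φ) = M.dual.l u φ := by
      intro u φ; rw [← hLm, one_mul]
    have hL1' : ∀ (u : Unitization ℂ A) (φ : X →L[ℂ] ℂ),
        M.dual.l u (M.dual.l 1 φ) = M.dual.l u φ := by
      intro u φ; rw [← hLm, mul_one]
    have hR1 : ∀ (u : Unitization ℂ A) (φ : X →L[ℂ] ℂ),
        M.dual.r 1 (M.dual.r u φ) = M.dual.r u φ := by
      intro u φ; rw [← hRm, mul_one]
    have hR1' : ∀ (u : Unitization ℂ A) (φ : X →L[ℂ] ℂ),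
        M.dual.r u (M.dual.r 1 φ) = M.dual.r u φ := by
      intro u φ; rw [← hRm, one_mul]
    -- the compression operator `φ ↦ e·φ·e`
    set c : (X →L[ℂ] ℂ) →L[ℂ] (X →L[ℂ] ℂ) := (M.dual.l 1).comp (M.dual.r 1) with hc
    have hcapp : ∀ φ : X →L[ℂ] ℂ, c φ = M.dual.l 1 (M.dual.r 1 φ) := fun φ => rfl
    have hcL : ∀ (u : Unitization ℂ A) (φ : X →L[ℂ] ℂ),
        c (M.dual.l u φ) = M.dual.l u (c φ) := by
      intro u φ
      rw [hcapp, hcapp, ← hLR u 1 φ, hL1 u (M.dual.r 1 φ), hL1' u (M.dual.r 1 φ)]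
    have hcR : ∀ (u : Unitization ℂ A) (φ : X →L[ℂ] ℂ),
        c (M.dual.r u φ) = M.dual.r u (c φ) := by
      intro u φ
      rw [hcapp, hcapp, hR1 u φ, hLR 1 u φ, hLR 1 1 φ, hR1' u (M.dual.l 1 φ)]
    have hcc : ∀ φ : X →L[ℂ] ℂ, c (c φ) = c φ := by
      intro φ
      rw [hcapp (c φ), hcapp φ, ← hLR 1 1 (M.dual.r 1 φ),
        hL1 1 (M.dual.r 1 (M.dual.r 1 φ)), hR1 1 φ]
    have hL1c : ∀ φ : X →L[ℂ] ℂ, M.dual.l 1 (c φ) = c φ := by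
      intro φ; rw [hcapp φ, hL1 1 (M.dual.r 1 φ)]
    have hR1c : ∀ φ : X →L[ℂ] ℂ, M.dual.r 1 (c φ) = c φ := by
      intro φ; rw [hcapp φ, ← hLR 1 1 (M.dual.r 1 φ), hR1 1 φ]
    -- derivation identities
    have hDu1 : ∀ u : Unitization ℂ A,
        D u - M.dual.l 1 (D u) = M.dual.r u (D 1) := by
      intro u
      have h := hD 1 u; rw [one_mul] at h
      exact sub_eq_of_eq_add' h
    have hDu2 : ∀ u : Unitization ℂ A,
        D u - M.dual.r 1 (D u) = M.dual.l u (D 1) := by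
      intro u
      have h := hD u 1; rw [mul_one] at h
      exact sub_eq_of_eq_add h
    have hcD : ∀ u : Unitization ℂ A,
        c (D u) = M.dual.l 1 (D u) + M.dual.r 1 (D u) - D u := by
      intro u
      have h1 : M.dual.r 1 (D u) = D u - M.dual.l u (D 1) := by
        rw [← hDu2 u]; abel
      rw [hcapp, h1, map_sub, hL1 u (D 1)]
      abel
    have hcD1 : c (D 1) = 0 := by
      have h := hD 1 1; rw [one_mul] at h
      rw [hcD 1, ← h]; abel
    -- the elements implementing the two exact inner corrections
    obtain ⟨ψ, hψ⟩ : ∃ w : X →L[ℂ] ℂ, w = D 1 - M.dual.l 1 (D 1) := ⟨_, rfl⟩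
    obtain ⟨χ, hχ⟩ : ∃ w : X →L[ℂ] ℂ,
        w = M.dual.l 1 (D 1) - M.dual.r 1 (M.dual.l 1 (D 1)) := ⟨_, rfl⟩
    obtain ⟨z, hzdef⟩ : ∃ w : X →L[ℂ] ℂ, w = χ - ψ := ⟨_, rfl⟩
    have hLψ : ∀ u : Unitization ℂ A, M.dual.l u ψ = 0 := by
      intro u; rw [hψ, map_sub, hL1' u (D 1), sub_self]
    have hRψ : ∀ u : Unitization ℂ A, M.dual.r u ψ = D u - M.dual.l 1 (D u) := by
      intro u
      rw [hψ, map_sub, ← hDu1 u, ← hLR 1 u (D 1), ← hDu1 u, map_sub, hL1 1 (D u)]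
      abel
    have hLχ : ∀ u : Unitization ℂ A, M.dual.l u χ = D u - M.dual.r 1 (D u) := by
      intro u
      rw [hχ, map_sub, hL1' u (D 1), hLR u 1 (M.dual.l 1 (D 1)), hL1' u (D 1),
        ← hDu2 u, map_sub, hR1 1 (D u)]
      abel
    have hRχ : ∀ u : Unitization ℂ A, M.dual.r u χ = 0 := by
      intro u; rw [hχ, map_sub, hR1' u (M.dual.l 1 (D 1)), sub_self]
    have hz : ∀ u : Unitization ℂ A,
        M.dual.l u z - M.dual.r u z = D u - c (D u) := by
      intro u
      rw [hzdef, map_sub, map_sub, hLψ u, hRψ u, hLχ u, hRχ u, hcD u]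
      abel
    -- the restricted derivation into the dual of the restricted bimodule
    have hres : ∀ (a : A) (φ : X →L[ℂ] ℂ),
        M.restrict.dual.l a φ = M.dual.l (↑a) φ := fun a φ => rfl
    have hres' : ∀ (a : A) (φ : X →L[ℂ] ℂ),
        M.restrict.dual.r a φ = M.dual.r (↑a) φ := fun a φ => rfl
    obtain ⟨D', hD'app⟩ : ∃ D' : A →L[ℂ] (X →L[ℂ] ℂ), ∀ a : A, D' a = c (D ↑a) := by
      refine ⟨⟨⟨⟨fun a => c (D ↑a), fun a b => ?_⟩, fun r a => ?_⟩, ?_⟩, fun a => rfl⟩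
      · show c (D ↑(a + b)) = c (D ↑a) + c (D ↑b)
        have h : ((a + b : A) : Unitization ℂ A) = ↑a + ↑b := by
          refine Unitization.ext ?_ ?_ <;> simp
        rw [h, map_add D, map_add c]
      · show c (D ↑(r • a)) = r • c (D ↑a)
        have h : ((r • a : A) : Unitization ℂ A) = r • ↑a := by
          refine Unitization.ext ?_ ?_ <;> simp
        rw [h, map_smul D, map_smul c]
      · show Continuous fun a : A => c (D ↑a)
        have hcont : Continuous (⇑D ∘ (fun a : A => (a : Unitization ℂ A))) := by
          refine D.continuous.comp ?_
          refine (LipschitzWith.of_dist_le_mul (K := 1) fun p q => ?_).continuous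
          rw [NNReal.coe_one, one_mul, dist_eq_norm, dist_eq_norm]
          have h2 : ((p : Unitization ℂ A) - (q : Unitization ℂ A))
              = ((p - q : A) : Unitization ℂ A) := by
            refine Unitization.ext ?_ ?_ <;> simp
          rw [h2, norm_unitization_inr]
        exact c.continuous.comp hcont
    have hD' : M.restrict.dual.IsDerivation D' := by
      intro a b
      rw [hD'app, hD'app, hD'app, hres, hres',
        show ((a * b : A) : Unitization ℂ A) = (a : Unitization ℂ A) * (b : Unitization ℂ A)
          from Unitization.inr_mul ℂ a b,
        hD ↑a ↑b, map_add, hcL, hcR]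
    obtain ⟨ι, F, x, hne, hx⟩ := hA X iX1 iX2 M.restrict D' hD'
    refine ⟨ι, F, fun i => c (x i) + z, hne, fun u => ?_⟩
    have hxu := hx u.snd
    simp only [hres, hres'] at hxu
    -- decomposition of `u`
    have hudecomp : u = (↑u.snd : Unitization ℂ A) + u.fst • 1 := by
      refine Unitization.ext ?_ ?_ <;>
        simp [Unitization.fst_smul, Unitization.snd_smul, Unitization.fst_one,
          Unitization.snd_one]
    have hLu : ∀ φ : X →L[ℂ] ℂ,
        M.dual.l u φ = M.dual.l ↑u.snd φ + u.fst • M.dual.l 1 φ := by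
      intro φ
      conv_lhs => rw [hudecomp, M.dual.l_add, M.dual.l_smul]
      simp only [ContinuousLinearMap.add_apply, ContinuousLinearMap.smul_apply]
    have hRu : ∀ φ : X →L[ℂ] ℂ,
        M.dual.r u φ = M.dual.r ↑u.snd φ + u.fst • M.dual.r 1 φ := by
      intro φ
      conv_lhs => rw [hudecomp, M.dual.r_add, M.dual.r_smul]
      simp only [ContinuousLinearMap.add_apply, ContinuousLinearMap.smul_apply]
    have key : ∀ i, M.dual.l u (c (x i) + z) - M.dual.r u (c (x i) + z)
        = c (M.dual.l ↑u.snd (x i) - M.dual.r ↑u.snd (x i)) + (D u - c (D u)) := by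
      intro i
      rw [map_add, map_add, ← hz u, map_sub, hcL, hcR, hLu (c (x i)), hRu (c (x i)),
        hL1c (x i), hR1c (x i)]
      abel
    simp only [key]
    have hlim : Tendsto (fun i => c (M.dual.l ↑u.snd (x i) - M.dual.r ↑u.snd (x i))) F
        (𝓝 (c (D' u.snd))) := (c.continuous.tendsto _).comp hxu
    have h2 : D u = D ↑u.snd + u.fst • D 1 := by
      conv_lhs => rw [hudecomp]
      rw [map_add D, map_smul D]
    have hval : c (D' u.snd) = c (D u) := by
      rw [hD'app, hcc, h2, map_add c, map_smul c, hcD1, smul_zero, add_zero]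
    rw [hval] at hlim
    have hfin2 : Tendsto (fun i => c (M.dual.l ↑u.snd (x i) - M.dual.r ↑u.snd (x i))
        + (D u - c (D u))) F (𝓝 (c (D u) + (D u - c (D u)))) := hlim.add tendsto_const_nhds
    have hfinal : c (D u) + (D u - c (D u)) = D u := by abel
    rw [hfinal] at hfin2
    exact hfin2

  · intro hB X iX1 iX2 M D hD
    letI : UniformSpace (Unitization ℂ A) := PseudoMetricSpace.toUniformSpace
    have hdl : ∀ (u : Unitization ℂ A) (φ : X →L[ℂ] ℂ),
        (M.unitize).dual.l u φ = M.dual.l u.snd φ + u.fst • φ := by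
      intro u φ
      rw [BanachBimod.dual_l_apply, BanachBimod.dual_l_apply,
        show M.unitize.r u = M.r u.snd + u.fst • ContinuousLinearMap.id ℂ X from rfl]
      ext ξ
      simp
    have hdr : ∀ (u : Unitization ℂ A) (φ : X →L[ℂ] ℂ),
        (M.unitize).dual.r u φ = M.dual.r u.snd φ + u.fst • φ := by
      intro u φ
      rw [BanachBimod.dual_r_apply, BanachBimod.dual_r_apply,
        show M.unitize.l u = M.l u.snd + u.fst • ContinuousLinearMap.id ℂ X from rfl]
      ext ξ
      simp
    obtain ⟨D', hD'app⟩ : ∃ D' : Unitization ℂ A →L[ℂ] (X →L[ℂ] ℂ),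
        ∀ u : Unitization ℂ A, D' u = D u.snd := by
      refine ⟨⟨⟨⟨fun u => D u.snd, fun u v => ?_⟩, fun r u => ?_⟩, ?_⟩, fun u => rfl⟩
      · show D (u + v).snd = D u.snd + D v.snd
        rw [Unitization.snd_add, map_add D]
      · show D (r • u).snd = r • D u.snd
        rw [Unitization.snd_smul, map_smul D]
      · show Continuous fun u : Unitization ℂ A => D u.snd
        have hcont : Continuous (⇑D ∘ (fun u : Unitization ℂ A => u.snd)) := by
          refine D.continuous.comp ?_
          refine (LipschitzWith.of_dist_le_mul (K := 1) fun p q => ?_).continuous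
          rw [NNReal.coe_one, one_mul, dist_eq_norm, dist_eq_norm]
          have h : (p - q : Unitization ℂ A).snd = p.snd - q.snd := rfl
          rw [← h, norm_unitization_def]
          exact le_add_of_nonneg_left (norm_nonneg _)
        exact hcont
    have hder : (M.unitize).dual.IsDerivation D' := by
      intro u v
      rw [hD'app, hD'app, hD'app, hdl, hdr,
        Unitization.snd_mul, map_add D, map_add D, map_smul D, map_smul D, hD u.snd v.snd]
      abel
    obtain ⟨ι, F, x, hne, hx⟩ := hB X iX1 iX2 M.unitize D' hder
    refine ⟨ι, F, x, hne, fun a => ?_⟩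
    have h := hx ↑a
    simp only [hdl, hdr, Unitization.fst_inr, Unitization.snd_inr, hD'app] at h
    simpa using h
end
end

section
/- If a Banach algebra A is sequentially approximately amenable, then A is boundedly approximately amenable. -/
open Filter Topology TensorProduct

section Aux

variable {A : Type} [NonUnitalNormedRing A] [NormedSpace ℂ A]
  [IsScalarTower ℂ A A] [SMulCommClass ℂ A A]
variable {X : Type} [NormedAddCommGroup X] [NormedSpace ℂ X]

/-- The inner derivation `ad x : a ↦ a·x − x·a` as a continuous linear map. -/
noncomputable def BanachBimod.adMap (M : BanachBimod A X) (x : X) : A →L[ℂ] X :=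
  LinearMap.mkContinuousOfExistsBound
    { toFun := fun a => M.l a x - M.r a x
      map_add' := fun a b => by
        simp [M.l_add, M.r_add]; abel
      map_smul' := fun c a => by
        simp [M.l_smul, M.r_smul, smul_sub] }
    (by
      obtain ⟨Cl, hCl⟩ := M.l_bound
      obtain ⟨Cr, hCr⟩ := M.r_bound
      refine ⟨(Cl + Cr) * ‖x‖, fun a => ?_⟩
      calc ‖M.l a x - M.r a x‖ ≤ ‖M.l a x‖ + ‖M.r a x‖ := norm_sub_le _ _
        _ ≤ ‖M.l a‖ * ‖x‖ + ‖M.r a‖ * ‖x‖ := by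
            gcongr <;> exact ContinuousLinearMap.le_opNorm _ _
        _ ≤ Cl * ‖a‖ * ‖x‖ + Cr * ‖a‖ * ‖x‖ := by
            gcongr <;> [exact hCl a; exact hCr a]
        _ = (Cl + Cr) * ‖x‖ * ‖a‖ := by ring)

@[simp] lemma BanachBimod.adMap_apply (M : BanachBimod A X) (x : X) (a : A) :
    M.adMap x a = M.l a x - M.r a x := rfl

end Aux

/-- If a Banach algebra `A` is sequentially approximately amenable, then `A` is
boundedly approximately amenable. -/
theorem seqApproxAmenable_implies_bddApproxAmenable
    (A : Type) [NonUnitalNormedRing A] [NormedSpace ℂ A]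
    [IsScalarTower ℂ A A] [SMulCommClass ℂ A A] [CompleteSpace A]
    (h : SeqApproximatelyAmenable A) : BddApproximatelyAmenable A := by
  intro X _ _ M D hD
  obtain ⟨x, hx⟩ := h X _ _ M D hD
  -- the inner derivations as continuous linear maps
  set T : ℕ → A →L[ℂ] (X →L[ℂ] ℂ) := fun n => M.dual.adMap (x n) with hT
  have hptwise : ∀ a : A, ∃ C : ℝ, ∀ n, ‖T n a‖ ≤ C := by
    intro a
    have h1 : Tendsto (fun n => ‖T n a‖) atTop (𝓝 ‖D a‖) := ((hx a).norm)
    obtain ⟨C, hC⟩ := h1.bddAbove_range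
    exact ⟨C, fun n => hC ⟨n, rfl⟩⟩
  obtain ⟨C', hC'⟩ := banach_steinhaus hptwise
  refine ⟨ℕ, atTop, x, atTop_neBot, ⟨C', fun n a => ?_⟩, hx⟩
  have := (T n).le_opNorm a
  calc ‖M.dual.l a (x n) - M.dual.r a (x n)‖ = ‖T n a‖ := rfl
    _ ≤ ‖T n‖ * ‖a‖ := (T n).le_opNorm a
    _ ≤ C' * ‖a‖ := by gcongr; exact hC' n
end

section
/- Let A be a Banach algebra and n ≥ 1. If the n-th strong-operator-topology cohomology group H^n_s(A, X*) vanishes for every dual Banach A-bimodule X*, then H^n_s(A, X) vanishes for every Banach A-bimodule X. -/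
open Filter Topology TensorProduct

noncomputable section

variable {A : Type} [NonUnitalNormedRing A] [NormedSpace ℂ A]
  [IsScalarTower ℂ A A] [SMulCommClass ℂ A A]
variable {X : Type} [NormedAddCommGroup X] [NormedSpace ℂ X]

/-- The Hochschild coboundary `δ^{n+1} : L^n(A,X) → L^{n+1}(A,X)` (as a raw function on
`(n+1)`-tuples). -/
def hochschildCobound (M : BanachBimod A X) (n : ℕ)
    (T : ContinuousMultilinearMap ℂ (fun _ : Fin n => A) X) (a : Fin (n + 1) → A) : X :=
  M.l (a 0) (T fun i => a i.succ)
    + ∑ i : Fin n, ((-1 : ℂ) ^ ((i : ℕ) + 1)) •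
        T (fun j : Fin n => if (j : ℕ) < (i : ℕ) then a j.castSucc
            else if j = i then a i.castSucc * a i.succ else a j.succ)
    + ((-1 : ℂ) ^ (n + 1)) • M.r (a (Fin.last n)) (T fun i => a i.castSucc)

/-- Vanishing of the `(m+1)`-st strong-operator-topology Hochschild cohomology group
`H^{m+1}_s(A, X) = ker δ^{m+2} / cl_s(Im δ^{m+1})`: every continuous `(m+1)`-cocycle is a
strong-operator limit of coboundaries of continuous `m`-cochains. -/
def CohomVanishS (m : ℕ) (M : BanachBimod A X) : Prop :=
  ∀ T : ContinuousMultilinearMap ℂ (fun _ : Fin (m + 1) => A) X,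
    (∀ a : Fin (m + 2) → A, hochschildCobound M (m + 1) T a = 0) →
    ∃ (ι : Type) (φ : Filter ι)
        (Φ : ι → ContinuousMultilinearMap ℂ (fun _ : Fin m => A) X), φ.NeBot ∧
      ∀ a : Fin (m + 1) → A,
        Tendsto (fun j => hochschildCobound M m (Φ j) a) φ (𝓝 (T a))

end


noncomputable section AuxCohomProof

open Filter Topology

namespace CohomAuxNS

variable {A : Type} [NonUnitalNormedRing A] [NormedSpace ℂ A]
  [IsScalarTower ℂ A A] [SMulCommClass ℂ A A]
variable {X : Type} [NormedAddCommGroup X] [NormedSpace ℂ X]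

/-- Decomposition of a linear functional on a finite product of copies of `ℂ`. -/
lemma lin_decomp {κ : Type} [Fintype κ] [DecidableEq κ] (c : (κ → ℂ) →ₗ[ℂ] ℂ) (v : κ → ℂ) :
    c v = ∑ k, v k * c (Pi.single k 1) := by
  have hv : v = ∑ k, v k • (Pi.single k 1 : κ → ℂ) := by
    ext j
    simp [Pi.single_apply]
  conv_lhs => rw [hv]

  simp [map_sum, map_smul, smul_eq_mul]

/-- Weak-* density of `X` in its bidual, exact version at finitely many functionals. -/
lemma exists_pointwise_eq {κ : Type} [Fintype κ] (Ξ : (X →L[ℂ] ℂ) →L[ℂ] ℂ)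
    (G : κ → (X →L[ℂ] ℂ)) : ∃ x : X, ∀ k, G k x = Ξ (G k) := by
  classical
  set P : X →ₗ[ℂ] (κ → ℂ) := LinearMap.pi (fun k => (G k).toLinearMap) with hP
  set V : Submodule ℂ (κ → ℂ) := LinearMap.range P with hV
  set v : κ → ℂ := fun k => Ξ (G k) with hv
  by_cases hmem : v ∈ V
  · obtain ⟨x, hx⟩ := hmem
    refine ⟨x, fun k => ?_⟩
    have := congrFun hx k
    simpa [hP] using this
  · exfalso
    have hne : (Submodule.Quotient.mk v : (κ → ℂ) ⧸ V) ≠ 0 := by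
      simpa [Submodule.Quotient.mk_eq_zero] using hmem
    obtain ⟨φ, hφ⟩ : ∃ φ : Module.Dual ℂ ((κ → ℂ) ⧸ V), φ (Submodule.Quotient.mk v) ≠ 0 := by
      by_contra hcon
      push_neg at hcon
      exact hne ((Module.forall_dual_apply_eq_zero_iff ℂ _).mp hcon)
    set c : (κ → ℂ) →ₗ[ℂ] ℂ := φ.comp V.mkQ with hc
    have hcV : ∀ w ∈ V, c w = 0 := by
      intro w hw
      have h0 : V.mkQ w = 0 := (Submodule.Quotient.mk_eq_zero V).mpr hw
      simp [hc, LinearMap.comp_apply, h0]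
    have hchi : (∑ k, c (Pi.single k 1) • G k : X →L[ℂ] ℂ) = 0 := by
      ext x
      have h1 : c (P x) = 0 := hcV _ ⟨x, rfl⟩
      have h2 : c (P x) = ∑ k, G k x * c (Pi.single k 1) := by
        simpa [hP] using lin_decomp c (P x)
      have h3 : (∑ k, c (Pi.single k 1) • G k : X →L[ℂ] ℂ) x
          = ∑ k, c (Pi.single k 1) * G k x := by
        simp [ContinuousLinearMap.sum_apply]
      rw [h3, ContinuousLinearMap.zero_apply]
      rw [h2] at h1
      rw [← h1]
      exact Finset.sum_congr rfl fun k _ => mul_comm _ _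
    have hXi : Ξ (∑ k, c (Pi.single k 1) • G k) = c v := by
      rw [map_sum]
      simp only [map_smul, smul_eq_mul]
      rw [lin_decomp c v]
      exact Finset.sum_congr rfl fun k _ => mul_comm _ _
    rw [hchi, map_zero] at hXi
    have : c v ≠ 0 := by simpa [hc] using hφ
    exact this hXi.symm

/-- Interpolation: any `X**`-valued continuous multilinear map can be matched, at finitely many
points and against finitely many functionals, by an `X`-valued one. -/
lemma exists_interp {m : ℕ} {ι κ : Type} [Fintype ι] [Fintype κ]
    (Φ : ContinuousMultilinearMap ℂ (fun _ : Fin m => A) ((X →L[ℂ] ℂ) →L[ℂ] ℂ))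
    (p : ι → (Fin m → A)) (G : κ → (X →L[ℂ] ℂ)) :
    ∃ Ψ : ContinuousMultilinearMap ℂ (fun _ : Fin m => A) X,
      ∀ i k, G k (Ψ (p i)) = Φ (p i) (G k) := by
  classical
  set e : ContinuousMultilinearMap ℂ (fun _ : Fin m => A) ℂ →ₗ[ℂ] (ι → ℂ) :=
    { toFun := fun L => fun i => L (p i)
      map_add' := fun L₁ L₂ => by ext i; simp
      map_smul' := fun cc L => by ext i; simp } with he
  set W : Submodule ℂ (ι → ℂ) := LinearMap.range e with hW
  haveI : FiniteDimensional ℂ W := inferInstance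
  set b := Module.finBasis ℂ W with hbdef
  have hpre : ∀ k, ∃ L, e L = (b k : ι → ℂ) := fun k => (b k).2
  choose μ hμ using hpre
  obtain ⟨q, hq⟩ := Submodule.exists_isCompl W
  set pr := Submodule.linearProjOfIsCompl W q hq with hprdef
  set Ξ : Fin (Module.finrank ℂ W) → ((X →L[ℂ] ℂ) →L[ℂ] ℂ) :=
    fun k => ∑ i, (b.repr (pr (Pi.single i 1)) k) • Φ (p i) with hΞ
  have key : ∀ (ψ : X →L[ℂ] ℂ) (i : ι), Φ (p i) ψ = ∑ k, Ξ k ψ * (b k : ι → ℂ) i := by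
    intro ψ i
    have hmem : (fun i => Φ (p i) ψ) ∈ W := by
      refine ⟨(ContinuousLinearMap.apply ℂ ℂ ψ).compContinuousMultilinearMap Φ, ?_⟩
      ext i
      simp [he]
    set w : W := ⟨fun i => Φ (p i) ψ, hmem⟩ with hwdef
    have hrepr' : ∀ j, (∑ k, b.repr w k * (b k : ι → ℂ) j) = Φ (p j) ψ := by
      intro j
      have hrepr := b.sum_repr w
      have := congrArg (fun z : W => (z : ι → ℂ) j) hrepr
      simp only [Submodule.coe_sum, Submodule.coe_smul, Finset.sum_apply, Pi.smul_apply,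
        smul_eq_mul] at this
      exact this
    have hcoord : ∀ k, Ξ k ψ = b.repr w k := by
      intro k
      set ck : (ι → ℂ) →ₗ[ℂ] ℂ := (b.coord k).comp pr with hck
      have h1 : Ξ k ψ = ∑ i, Φ (p i) ψ * ck (Pi.single i 1) := by
        rw [hΞ]
        rw [ContinuousLinearMap.sum_apply]
        refine Finset.sum_congr rfl fun i _ => ?_
        rw [ContinuousLinearMap.smul_apply, smul_eq_mul, mul_comm]
        rfl
      have h2 : ck (fun i => Φ (p i) ψ) = ∑ i, Φ (p i) ψ * ck (Pi.single i 1) :=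
        lin_decomp ck _
      have h3 : ck (fun i => Φ (p i) ψ) = b.repr w k := by
        have hprw : pr ((w : ι → ℂ)) = w := Submodule.linearProjOfIsCompl_apply_left hq w
        have : ck ((w : ι → ℂ)) = b.repr w k := by
          rw [hck]
          simp only [LinearMap.comp_apply, hprw]
          rfl
        simpa [hwdef] using this
      rw [h1, ← h2, h3]
    calc Φ (p i) ψ = ∑ k, b.repr w k * (b k : ι → ℂ) i := (hrepr' i).symm
      _ = ∑ k, Ξ k ψ * (b k : ι → ℂ) i :=
          Finset.sum_congr rfl fun k _ => by rw [hcoord k]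
  have hx : ∀ k, ∃ x : X, ∀ k', G k' x = Ξ k (G k') := fun k => exists_pointwise_eq (Ξ k) G
  choose x hxs using hx
  refine ⟨∑ k, (μ k).smulRight (x k), ?_⟩
  intro i k
  have happ : (∑ kk, (μ kk).smulRight (x kk)) (p i) = ∑ kk, μ kk (p i) • x kk := by
    simp [ContinuousMultilinearMap.sum_apply]
  rw [happ, map_sum]
  have hterm : ∀ kk, G k (μ kk (p i) • x kk) = (b kk : ι → ℂ) i * Ξ kk (G k) := by
    intro kk
    rw [map_smul, smul_eq_mul]
    have hbk : μ kk (p i) = (b kk : ι → ℂ) i := by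
      have := congrFun (hμ kk) i
      simpa [he] using this
    rw [hbk, hxs kk k]
  rw [Finset.sum_congr rfl (fun kk _ => hterm kk), key (G k) i]
  exact Finset.sum_congr rfl fun kk _ => mul_comm _ _

/-- The canonical single-coordinate inclusion as a continuous linear map. -/
def singleCLM {ι : Type} [Fintype ι] [DecidableEq ι] (a : ι) : X →L[ℂ] (ι → X) :=
  LinearMap.mkContinuous (LinearMap.single ℂ (fun _ : ι => X) a) 1 (fun x => by
    rw [one_mul]
    refine (pi_norm_le_iff_of_nonneg (norm_nonneg x)).mpr fun j => ?_
    rcases eq_or_ne j a with hja | hja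
    · subst hja
      simp [LinearMap.coe_single, Pi.single_eq_same]
    · simp [LinearMap.coe_single, Pi.single_eq_of_ne hja])

@[simp] lemma singleCLM_apply {ι : Type} [Fintype ι] [DecidableEq ι] (a : ι) (x : X) :
    singleCLM a x = Pi.single a x := rfl

lemma cobound_add (M : BanachBimod A X) (n : ℕ)
    (T₁ T₂ : ContinuousMultilinearMap ℂ (fun _ : Fin n => A) X) (a : Fin (n + 1) → A) :
    hochschildCobound M n (T₁ + T₂) a
      = hochschildCobound M n T₁ a + hochschildCobound M n T₂ a := by
  simp only [hochschildCobound, ContinuousMultilinearMap.add_apply, map_add, smul_add,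
    Finset.sum_add_distrib]
  abel

lemma cobound_smul (M : BanachBimod A X) (n : ℕ) (c : ℂ)
    (T : ContinuousMultilinearMap ℂ (fun _ : Fin n => A) X) (a : Fin (n + 1) → A) :
    hochschildCobound M n (c • T) a = c • hochschildCobound M n T a := by
  simp only [hochschildCobound, ContinuousMultilinearMap.smul_apply, map_smul, smul_add,
    Finset.smul_sum, smul_smul, mul_comm c]

lemma dd_l_apply (M : BanachBimod A X) (a : A) (Ξ : (X →L[ℂ] ℂ) →L[ℂ] ℂ) (φ : X →L[ℂ] ℂ) :
    (M.dual.dual.l a Ξ) φ = Ξ (φ.comp (M.l a)) := rfl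

lemma dd_r_apply (M : BanachBimod A X) (a : A) (Ξ : (X →L[ℂ] ℂ) →L[ℂ] ℂ) (φ : X →L[ℂ] ℂ) :
    (M.dual.dual.r a Ξ) φ = Ξ (φ.comp (M.r a)) := rfl

lemma cobound_apply_dual (M : BanachBimod A X) (n : ℕ)
    (Ψ : ContinuousMultilinearMap ℂ (fun _ : Fin n => A) X) (a : Fin (n + 1) → A)
    (φ : X →L[ℂ] ℂ) :
    φ (hochschildCobound M n Ψ a)
      = (φ.comp (M.l (a 0))) (Ψ fun i => a i.succ)
        + ∑ i : Fin n, ((-1 : ℂ) ^ ((i : ℕ) + 1)) *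
            φ (Ψ (fun j : Fin n => if (j : ℕ) < (i : ℕ) then a j.castSucc
                else if j = i then a i.castSucc * a i.succ else a j.succ))
        + ((-1 : ℂ) ^ (n + 1)) * (φ.comp (M.r (a (Fin.last n)))) (Ψ fun i => a i.castSucc) := by
  simp [hochschildCobound, map_add, map_sum, map_smul, smul_eq_mul]

lemma cobound_dd_apply (M : BanachBimod A X) (n : ℕ)
    (Φ : ContinuousMultilinearMap ℂ (fun _ : Fin n => A) ((X →L[ℂ] ℂ) →L[ℂ] ℂ))
    (a : Fin (n + 1) → A) (φ : X →L[ℂ] ℂ) :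
    (hochschildCobound M.dual.dual n Φ a) φ
      = (Φ fun i => a i.succ) (φ.comp (M.l (a 0)))
        + ∑ i : Fin n, ((-1 : ℂ) ^ ((i : ℕ) + 1)) *
            (Φ (fun j : Fin n => if (j : ℕ) < (i : ℕ) then a j.castSucc
                else if j = i then a i.castSucc * a i.succ else a j.succ)) φ
        + ((-1 : ℂ) ^ (n + 1)) * (Φ fun i => a i.castSucc) (φ.comp (M.r (a (Fin.last n)))) := by
  simp only [hochschildCobound, ContinuousLinearMap.add_apply, ContinuousLinearMap.sum_apply,
    ContinuousLinearMap.smul_apply, smul_eq_mul, dd_l_apply, dd_r_apply]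

lemma cobound_incl (M : BanachBimod A X) (n : ℕ)
    (T : ContinuousMultilinearMap ℂ (fun _ : Fin n => A) X) (a : Fin (n + 1) → A) :
    hochschildCobound M.dual.dual n
        ((ContinuousLinearMap.apply ℂ ℂ (E := X)).compContinuousMultilinearMap T) a
      = ContinuousLinearMap.apply ℂ ℂ (E := X) (hochschildCobound M n T a) := by
  ext φ
  rw [cobound_dd_apply, ContinuousLinearMap.apply_apply, cobound_apply_dual]
  simp

end CohomAuxNS

end AuxCohomProof

set_option maxHeartbeats 2000000 in
set_option synthInstance.maxHeartbeats 200000 in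
/-- Let `A` be a Banach algebra and `n = m + 1 ≥ 1`. If `H^n_s(A, X*) = {0}` for
every dual Banach `A`-bimodule `X*`, then `H^n_s(A, X) = {0}` for every Banach
`A`-bimodule `X`. -/
theorem cohomVanishS_of_cohomVanishS_dual
    (A : Type) [NonUnitalNormedRing A] [NormedSpace ℂ A]
    [IsScalarTower ℂ A A] [SMulCommClass ℂ A A] [CompleteSpace A] (m : ℕ)
    (h : ∀ (X : Type) (_ : NormedAddCommGroup X) (_ : NormedSpace ℂ X)
      (M : BanachBimod A X), CohomVanishS m M.dual) :
    ∀ (X : Type) (_ : NormedAddCommGroup X) (_ : NormedSpace ℂ X)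
      (M : BanachBimod A X), CohomVanishS m M := by
  intro X iG iS M
  letI := iG
  letI := iS
  intro T hT
  classical
  -- the cocycle `T` pushed into the double dual is a cocycle for `M.dual.dual`
  have hT' : ∀ a : Fin (m + 2) → A,
      hochschildCobound M.dual.dual (m + 1)
        ((ContinuousLinearMap.apply ℂ ℂ (E := X)).compContinuousMultilinearMap T) a = 0 := by
    intro a
    rw [CohomAuxNS.cobound_incl, hT a, map_zero]
  obtain ⟨J, φ₀, Φ, hne, hconv⟩ := h (X →L[ℂ] ℂ) inferInstance inferInstance M.dual
    ((ContinuousLinearMap.apply ℂ ℂ (E := X)).compContinuousMultilinearMap T) hT'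
  haveI := hne
  -- norm approximation of `T` by coboundaries on finite sets of tuples
  have stepN : ∀ S : Finset (Fin (m + 1) → A), ∀ ε : ℝ, 0 < ε →
      ∃ Ψ : ContinuousMultilinearMap ℂ (fun _ : Fin m => A) X,
        ∀ a ∈ S, ‖hochschildCobound M m Ψ a - T a‖ < ε := by
    intro S ε hε
    by_contra hcon
    push_neg at hcon
    set Dm : ContinuousMultilinearMap ℂ (fun _ : Fin m => A) X →ₗ[ℂ] (↥S → X) :=
      { toFun := fun Ψ => fun a => hochschildCobound M m Ψ ↑a
        map_add' := fun Ψ₁ Ψ₂ => funext fun a => CohomAuxNS.cobound_add M m Ψ₁ Ψ₂ ↑a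
        map_smul' := fun c Ψ => funext fun a => CohomAuxNS.cobound_smul M m c Ψ ↑a } with hDm
    set V : Submodule ℂ (↥S → X) := LinearMap.range Dm with hV
    set t : ↥S → X := fun a => T ↑a with htdef
    have ht : t ∉ closure (V : Set (↥S → X)) := by
      intro hcl
      obtain ⟨y, hyV, hdist⟩ := Metric.mem_closure_iff.mp hcl ε hε
      obtain ⟨Ψ, rfl⟩ := hyV
      obtain ⟨a, haS, hage⟩ := hcon Ψ
      have h2 := norm_le_pi_norm (Dm Ψ - t) ⟨a, haS⟩
      have h3 : (Dm Ψ - t) ⟨a, haS⟩ = hochschildCobound M m Ψ a - T a := rfl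
      rw [h3] at h2
      rw [dist_eq_norm, norm_sub_rev] at hdist
      linarith
    have hVconv : Convex ℝ (V : Set (↥S → X)) := by
      intro y₁ h₁ y₂ h₂ cα cβ _ _ _
      have hmm := V.add_mem (V.smul_mem ((cα : ℝ) : ℂ) h₁) (V.smul_mem ((cβ : ℝ) : ℂ) h₂)
      simpa using hmm
    obtain ⟨f, u, hfu, hut⟩ :=
      geometric_hahn_banach_closed_point hVconv.closure isClosed_closure ht
    have hu : 0 < u := by
      have := hfu 0 (subset_closure V.zero_mem)
      simpa using this
    have hf0 : ∀ y ∈ V, f y = 0 := by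
      intro y hy
      by_contra hne0
      have hscale : ∀ cc : ℝ, cc * f y < u := by
        intro cc
        have hyV : cc • y ∈ V := by
          have := V.smul_mem ((cc : ℝ) : ℂ) hy
          simpa using this
        have := hfu _ (subset_closure hyV)
        simpa [map_smul] using this
      have h5 := hscale ((u + 1) / f y)
      rw [div_mul_cancel₀ _ hne0] at h5
      linarith
    set χ : (↥S → X) →L[ℂ] ℂ := f.extendTo𝕜' with hχdef
    have hχV : ∀ y ∈ V, χ y = 0 := by
      intro y hy
      rw [hχdef, show ContinuousLinearMap.extendTo𝕜' f = (StrongDual.extendRCLike f : (↥S → X) →L[ℂ] ℂ) from rfl, ContinuousLinearMap.extendTo𝕜'_apply, hf0 y hy, hf0 _ (V.smul_mem _ hy)]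
      simp
    have hχt : 0 < ‖χ t‖ := by
      have hre : (χ t).re = f t := by
        rw [hχdef, show ContinuousLinearMap.extendTo𝕜' f = (StrongDual.extendRCLike f : (↥S → X) →L[ℂ] ℂ) from rfl, ContinuousLinearMap.extendTo𝕜'_apply]
        simp
      have hft : 0 < (χ t).re := by rw [hre]; linarith
      calc (0 : ℝ) < (χ t).re := hft
        _ ≤ ‖χ t‖ := by
            exact Complex.re_le_norm _
    set Cs : ℝ := ∑ a : ↥S, ‖χ.comp (CohomAuxNS.singleCLM (X := X) a)‖ with hCsdef
    have hCs0 : 0 ≤ Cs := Finset.sum_nonneg fun a _ => norm_nonneg _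
    set δ : ℝ := ‖χ t‖ / (Cs + 1) with hδdef
    have hδ : 0 < δ := div_pos hχt (by linarith)
    have hev1 : ∀ a ∈ S, ∀ᶠ j in φ₀,
        ‖hochschildCobound M.dual.dual m (Φ j) a
          - (ContinuousLinearMap.apply ℂ ℂ (E := X)).compContinuousMultilinearMap T a‖ < δ := by
      intro a _
      have := Metric.tendsto_nhds.mp (hconv a) δ hδ
      exact this.mono fun j hj => by rwa [dist_eq_norm] at hj
    obtain ⟨j, hj⟩ := (S.eventually_all.mpr hev1).exists
    obtain ⟨Ψ, hΨ⟩ := CohomAuxNS.exists_interp (Φ j)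
      (fun ab : ↥S × (Fin m ⊕ Bool) =>
        Sum.elim
          (fun (i : Fin m) => fun jj : Fin m =>
            if (jj : ℕ) < (i : ℕ) then (ab.1 : Fin (m + 1) → A) jj.castSucc
            else if jj = i then
              (ab.1 : Fin (m + 1) → A) i.castSucc * (ab.1 : Fin (m + 1) → A) i.succ
            else (ab.1 : Fin (m + 1) → A) jj.succ)
          (fun bb => cond bb (fun i => (ab.1 : Fin (m + 1) → A) i.succ)
            (fun i => (ab.1 : Fin (m + 1) → A) i.castSucc))
          ab.2)
      (fun ak : ↥S × (Unit ⊕ Bool) =>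
        Sum.elim
          (fun _ => χ.comp (CohomAuxNS.singleCLM (X := X) ak.1))
          (fun bb => cond bb
            ((χ.comp (CohomAuxNS.singleCLM (X := X) ak.1)).comp
              (M.l ((ak.1 : Fin (m + 1) → A) 0)))
            ((χ.comp (CohomAuxNS.singleCLM (X := X) ak.1)).comp
              (M.r ((ak.1 : Fin (m + 1) → A) (Fin.last m)))))
          ak.2)
    have hkey : ∀ a : ↥S,
        (χ.comp (CohomAuxNS.singleCLM (X := X) a)) (hochschildCobound M m Ψ ↑a)
          = (hochschildCobound M.dual.dual m (Φ j) ↑a)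
              (χ.comp (CohomAuxNS.singleCLM (X := X) a)) := by
      intro a
      rw [CohomAuxNS.cobound_apply_dual, CohomAuxNS.cobound_dd_apply]
      have e1 := hΨ (a, Sum.inr true) (a, Sum.inr true)
      have e2 := hΨ (a, Sum.inr false) (a, Sum.inr false)
      simp only [Sum.elim_inl, Sum.elim_inr, cond_true, cond_false] at e1 e2
      refine congrArg₂ (· + ·) (congrArg₂ (· + ·) e1 ?_)
        (congrArg (fun z => ((-1 : ℂ) ^ (m + 1)) * z) e2)
      refine Finset.sum_congr rfl fun i _ => ?_
      have e3 := hΨ (a, Sum.inl i) (a, Sum.inl ())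
      simp only [Sum.elim_inl] at e3
      exact congrArg (fun z => ((-1 : ℂ) ^ ((i : ℕ) + 1)) * z) e3
    have hfinal : ‖χ t‖ ≤ Cs * δ := by
      have hz : χ (Dm Ψ) = 0 := hχV _ ⟨Ψ, rfl⟩
      have h1 : χ t = χ (t - Dm Ψ) := by rw [map_sub, hz, sub_zero]
      have hdec : χ (t - Dm Ψ) = ∑ a : ↥S, χ (Pi.single a ((t - Dm Ψ) a)) := by
        conv_lhs => rw [show (t - Dm Ψ) = ∑ a : ↥S, Pi.single a ((t - Dm Ψ) a) by
          ext jj; simp [Pi.single_apply]]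
        rw [map_sum]
      rw [h1, hdec, hCsdef, Finset.sum_mul]
      refine le_trans (norm_sum_le _ _) (Finset.sum_le_sum fun a _ => ?_)
      have hsingle : χ (Pi.single a ((t - Dm Ψ) a))
          = (χ.comp (CohomAuxNS.singleCLM (X := X) a))
              (T ↑a - hochschildCobound M m Ψ ↑a) := rfl
      rw [hsingle, map_sub, hkey a]
      have hTa : (χ.comp (CohomAuxNS.singleCLM (X := X) a)) (T ↑a)
          = ((ContinuousLinearMap.apply ℂ ℂ (E := X)).compContinuousMultilinearMap T ↑a)
              (χ.comp (CohomAuxNS.singleCLM (X := X) a)) := by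
        simp
      rw [hTa]
      have hsub :
          ((ContinuousLinearMap.apply ℂ ℂ (E := X)).compContinuousMultilinearMap T ↑a)
              (χ.comp (CohomAuxNS.singleCLM (X := X) a))
            - (hochschildCobound M.dual.dual m (Φ j) ↑a)
              (χ.comp (CohomAuxNS.singleCLM (X := X) a))
          = (((ContinuousLinearMap.apply ℂ ℂ (E := X)).compContinuousMultilinearMap T ↑a)
              - hochschildCobound M.dual.dual m (Φ j) ↑a)
              (χ.comp (CohomAuxNS.singleCLM (X := X) a)) := by
        simp
      rw [hsub]
      refine le_trans (ContinuousLinearMap.le_opNorm _ _) ?_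
      rw [mul_comm]
      refine mul_le_mul_of_nonneg_left ?_ (norm_nonneg _)
      rw [norm_sub_rev]
      exact le_of_lt (hj ↑a a.2)
    have hlt : Cs * δ < ‖χ t‖ := by
      have h6 : Cs * δ = ‖χ t‖ * (Cs / (Cs + 1)) := by rw [hδdef]; ring
      have h7 : Cs / (Cs + 1) < 1 := by
        rw [div_lt_one (by linarith)]
        linarith
      calc Cs * δ = ‖χ t‖ * (Cs / (Cs + 1)) := h6
        _ < ‖χ t‖ * 1 := mul_lt_mul_of_pos_left h7 hχt
        _ = ‖χ t‖ := mul_one _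
    linarith
  -- assemble the approximating net
  have stepN' : ∀ Sn : Finset (Fin (m + 1) → A) × ℕ,
      ∃ Ψ : ContinuousMultilinearMap ℂ (fun _ : Fin m => A) X,
        ∀ a ∈ Sn.1, ‖hochschildCobound M m Ψ a - T a‖ < 1 / ((Sn.2 : ℝ) + 1) := by
    intro Sn
    exact stepN Sn.1 _ (by positivity)
  choose Ψnet hΨnet using stepN'
  refine ⟨Finset (Fin (m + 1) → A) × ℕ, atTop, Ψnet, atTop_neBot, ?_⟩
  intro a
  rw [Metric.tendsto_nhds]
  intro ε hε
  obtain ⟨N, hN⟩ := exists_nat_one_div_lt hε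
  rw [Filter.eventually_atTop]
  refine ⟨({a}, N), ?_⟩
  rintro ⟨S, n⟩ hSn
  have haS : a ∈ S := Finset.singleton_subset_iff.mp (Finset.le_iff_subset.mp hSn.1)
  have hnN : N ≤ n := hSn.2
  have h1 := hΨnet (S, n) a haS
  have h2 : 1 / ((n : ℝ) + 1) ≤ 1 / ((N : ℝ) + 1) := by
    apply one_div_le_one_div_of_le (by positivity)
    have : (N : ℝ) ≤ (n : ℝ) := by exact_mod_cast hnN
    linarith
  rw [dist_eq_norm]
  calc ‖hochschildCobound M m (Ψnet (S, n)) a - T a‖ < 1 / ((n : ℝ) + 1) := h1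
    _ ≤ 1 / ((N : ℝ) + 1) := h2
    _ < ε := hN
end

section
/- A unital Banach algebra that is pseudo-contractible is contractible. -/
open Filter Topology TensorProduct

/-- A unital Banach algebra that is pseudo-contractible is contractible. -/
theorem unital_pseudoContractible_implies_contractible
    (A : Type) [NormedRing A] [NormedAlgebra ℂ A] [CompleteSpace A]
    (h : PseudoContractible A) : Contractible A := by
  obtain ⟨ι, φ, u, hφ, hcent, happ⟩ := h
  haveI := hφ
  -- basic lemmas on the tensor operations
  have tpiL : ∀ (a : A) (t : A ⊗[ℂ] A), tpi A (tactL A a t) = a * tpi A t := by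
    intro a t
    induction t using TensorProduct.induction_on with
    | zero => simp
    | tmul p q => simp [tactL, tpi, mul_assoc]
    | add s t hs ht => simp only [map_add, mul_add, hs, ht]
  have tpiR : ∀ (a : A) (t : A ⊗[ℂ] A), tpi A (tactR A a t) = tpi A t * a := by
    intro a t
    induction t using TensorProduct.induction_on with
    | zero => simp
    | tmul p q => simp [tactR, tpi, mul_assoc]
    | add s t hs ht => simp only [map_add, add_mul, hs, ht]
  have tLR : ∀ (a b : A) (t : A ⊗[ℂ] A),
      tactL A a (tactR A b t) = tactR A b (tactL A a t) := by
    intro a b t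
    induction t using TensorProduct.induction_on with
    | zero => simp
    | tmul p q => simp [tactL, tactR]
    | add s t hs ht => simp only [map_add, hs, ht]
  have tRR : ∀ (a b : A) (t : A ⊗[ℂ] A),
      tactR A a (tactR A b t) = tactR A (b * a) t := by
    intro a b t
    induction t using TensorProduct.induction_on with
    | zero => simp
    | tmul p q => simp [tactR, mul_assoc]
    | add s t hs ht => simp only [map_add, hs, ht]
  -- find an index where π(u i) is invertible
  obtain ⟨i0, hi0⟩ := ((happ 1).eventually (gt_mem_nhds one_pos)).exists
  rw [mul_one] at hi0
  set e := tpi A (u i0) with he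
  have hec : ∀ a : A, a * e = e * a := by
    intro a
    have hc := congrArg (tpi A) (hcent a i0)
    rw [tpiL, tpiR] at hc
    exact hc
  have hnorm : ‖(1 : A) - e‖ < 1 := by rwa [norm_sub_rev]
  set w : Aˣ := Units.oneSub (1 - e) hnorm with hw
  have hwe : (w : A) = e := by
    show (1 : A) - (1 - e) = e
    rw [sub_sub_cancel]
  set q : A := ((w⁻¹ : Aˣ) : A) with hq
  have heq : e * q = 1 := by rw [← hwe, hq]; exact w.mul_inv
  have hqe : q * e = 1 := by rw [← hwe, hq]; exact w.inv_mul
  have hqc : ∀ a : A, a * q = q * a := by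
    intro a
    have h1 : q * (a * e) * q = q * (e * a) * q := by rw [hec]
    have h2 : q * (a * e) * q = q * a := by
      rw [← mul_assoc q a e, mul_assoc (q * a) e q, heq, mul_one]
    have h3 : q * (e * a) * q = a * q := by
      rw [← mul_assoc q e a, hqe, one_mul]
    rw [← h3, ← h1, h2]
  -- the exact central diagonal
  obtain ⟨v, hv⟩ : ∃ v : A ⊗[ℂ] A, v = tactR A q (u i0) := ⟨_, rfl⟩
  have hvπ : tpi A v = 1 := by rw [hv, tpiR, ← he, heq]
  have hvc : ∀ a : A, tactL A a v = tactR A a v := by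
    intro a
    rw [hv, tLR, hcent a i0, tRR, tRR, hqc a]
  -- now prove contractibility
  intro X _inst1 _inst2 M D hD
  have hl0 : M.l (0 : A) = 0 := by
    have := M.l_smul 0 0; simpa using this
  let bil : A →ₗ[ℂ] A →ₗ[ℂ] X := LinearMap.mk₂ ℂ (fun a b => M.l a (D b))
    (fun a a' b => by beta_reduce; rw [M.l_add]; simp)
    (fun s a b => by beta_reduce; rw [M.l_smul]; simp)
    (fun a b b' => by simp)
    (fun a s b => by simp)
  let Φ : A ⊗[ℂ] A →ₗ[ℂ] X := TensorProduct.lift bil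
  have Φtmul : ∀ a b : A, Φ (a ⊗ₜ[ℂ] b) = M.l a (D b) := fun a b => rfl
  set d := D 1 with hdd
  have hΦL : ∀ (m : A) (t : A ⊗[ℂ] A), Φ (tactL A m t) = M.l m (Φ t) := by
    intro m t
    induction t using TensorProduct.induction_on with
    | zero => simp
    | tmul p r =>
      simp only [tactL, TensorProduct.map_tmul, LinearMap.mulLeft_apply,
        LinearMap.id_coe, id_eq, Φtmul]
      rw [M.l_mul]; rfl
    | add s t hs ht => simp only [map_add, hs, ht]
  have hΦR : ∀ (m : A) (t : A ⊗[ℂ] A),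
      Φ (tactR A m t) = M.l (tpi A t) (D m) + M.r m (Φ t) := by
    intro m t
    induction t using TensorProduct.induction_on with
    | zero => simp [hl0]
    | tmul p r =>
      simp only [tactR, TensorProduct.map_tmul, LinearMap.mulRight_apply,
        LinearMap.id_coe, id_eq, Φtmul]
      rw [hD r m, map_add]
      congr 1
      · show M.l p (M.l r (D m)) = M.l (tpi A (p ⊗ₜ[ℂ] r)) (D m)
        have : tpi A (p ⊗ₜ[ℂ] r) = p * r := rfl
        rw [this, M.l_mul]; rfl
      · show M.l p (M.r m (D r)) = M.r m (M.l p (D r))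
        exact DFunLike.congr_fun (M.lr_comm p m) (D r)
    | add s t hs ht =>
      simp only [map_add, hs, ht, M.l_add, ContinuousLinearMap.add_apply]
      abel
  set x := Φ v with hx
  have key : ∀ m : A, M.l m x = M.l 1 (D m) + M.r m x := by
    intro m
    have hcv := congrArg Φ (hvc m)
    rw [hΦL, hΦR, hvπ] at hcv
    exact hcv
  refine ⟨M.r 1 x - M.r 1 d + M.l 1 d, ?_⟩
  intro a
  -- pointwise operator identities
  have hrr1 : ∀ ξ : X, M.r a (M.r 1 ξ) = M.r a ξ := by
    have hcomp := M.r_mul 1 a; rw [one_mul] at hcomp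
    exact fun ξ => (DFunLike.congr_fun hcomp ξ).symm
  have hr1r : ∀ ξ : X, M.r 1 (M.r a ξ) = M.r a ξ := by
    have hcomp := M.r_mul a 1; rw [mul_one] at hcomp
    exact fun ξ => (DFunLike.congr_fun hcomp ξ).symm
  have hr1r1 : ∀ ξ : X, M.r 1 (M.r 1 ξ) = M.r 1 ξ := by
    have hcomp := M.r_mul 1 1; rw [mul_one] at hcomp
    exact fun ξ => (DFunLike.congr_fun hcomp ξ).symm
  have hll1 : ∀ ξ : X, M.l a (M.l 1 ξ) = M.l a ξ := by
    have hcomp := M.l_mul a 1; rw [mul_one] at hcomp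
    exact fun ξ => (DFunLike.congr_fun hcomp ξ).symm
  have hl1l1 : ∀ ξ : X, M.l 1 (M.l 1 ξ) = M.l 1 ξ := by
    have hcomp := M.l_mul 1 1; rw [mul_one] at hcomp
    exact fun ξ => (DFunLike.congr_fun hcomp ξ).symm
  have hlcr1 : ∀ ξ : X, M.l a (M.r 1 ξ) = M.r 1 (M.l a ξ) :=
    fun ξ => DFunLike.congr_fun (M.lr_comm a 1) ξ
  have hral1 : ∀ ξ : X, M.r a (M.l 1 ξ) = M.l 1 (M.r a ξ) :=
    fun ξ => (DFunLike.congr_fun (M.lr_comm 1 a) ξ).symm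
  have hii : D a = M.l 1 (D a) + M.r a d := by
    have := hD 1 a; rwa [one_mul] at this
  have hiii : D a = M.l a d + M.r 1 (D a) := by
    have := hD a 1; rwa [mul_one] at this
  have hlcd : M.l a d = D a - M.r 1 (D a) := eq_sub_iff_add_eq.mpr hiii.symm
  have hrcd : M.r a d = D a - M.l 1 (D a) :=
    eq_sub_iff_add_eq.mpr (by rw [add_comm]; exact hii.symm)
  have h7 := congrArg (M.r 1) hrcd
  rw [hr1r, map_sub, hrcd] at h7
  have e7 : M.r 1 (M.l 1 (D a)) = M.r 1 (D a) - (D a - M.l 1 (D a)) := by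
    rw [h7]; abel
  show D a = M.l a (M.r 1 x - M.r 1 d + M.l 1 d) - M.r a (M.r 1 x - M.r 1 d + M.l 1 d)
  simp only [map_sub, map_add, hlcr1, hral1, hrr1, hr1r, hr1r1, hll1, hl1l1,
    key a, hlcd, hrcd, e7]
  abel
end

section
/- If A is an abelian Banach algebra that is pseudo-amenable, then A is weakly amenable. -/
open Filter Topology TensorProduct

noncomputable section

variable (A : Type) [NonUnitalNormedRing A] [NormedSpace ℂ A]
  [IsScalarTower ℂ A A] [SMulCommClass ℂ A A]

/-- The regular Banach `A`-bimodule: `A` acting on itself by left and right multiplication. -/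
def regularBimod : BanachBimod A A where
  l a := ContinuousLinearMap.mul ℂ A a
  r a := (ContinuousLinearMap.mul ℂ A).flip a
  l_add a b := by simp
  l_smul c a := by simp
  r_add a b := by simp
  r_smul c a := by simp
  l_bound := ⟨‖ContinuousLinearMap.mul ℂ A‖, fun a => (ContinuousLinearMap.mul ℂ A).le_opNorm a⟩
  r_bound := ⟨‖(ContinuousLinearMap.mul ℂ A).flip‖,
    fun a => ((ContinuousLinearMap.mul ℂ A).flip).le_opNorm a⟩
  l_mul a b := by ext x; simp [mul_assoc]
  r_mul a b := by ext x; simp [mul_assoc]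
  lr_comm a b := by ext x; simp [mul_assoc]

/-- An abelian Banach algebra `A` is weakly amenable if every continuous derivation
`A → A*` is zero, where `A*` is the dual of the regular bimodule. -/
def WeaklyAmenable : Prop :=
  ∀ D : A →L[ℂ] (A →L[ℂ] ℂ), (regularBimod A).dual.IsDerivation D → D = 0

/-- Every element of an algebraic tensor product is a sum of a list of pure tensors. -/
lemma exists_list_rep {V W : Type} [AddCommGroup V] [Module ℂ V] [AddCommGroup W] [Module ℂ W]
    (v : V ⊗[ℂ] W) : ∃ L : List (V × W), v = (L.map fun p => p.1 ⊗ₜ[ℂ] p.2).sum := by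
  induction v using TensorProduct.induction_on with
  | zero => exact ⟨[], rfl⟩
  | tmul x y => exact ⟨[(x, y)], by simp⟩
  | add u w hu hw =>
    obtain ⟨L1, h1⟩ := hu
    obtain ⟨L2, h2⟩ := hw
    exact ⟨L1 ++ L2, by simp [h1, h2]⟩

/-- A linear functional on the tensor product that is bounded on pure tensors is bounded
by the projective tensor seminorm. -/
lemma lift_le_projTensorSN {V W : Type} [NormedAddCommGroup V] [Module ℂ V]
    [NormedAddCommGroup W] [Module ℂ W]
    (ψ : V ⊗[ℂ] W →ₗ[ℂ] ℂ) (K : ℝ) (hK : 0 ≤ K)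
    (hb : ∀ (x : V) (y : W), ‖ψ (x ⊗ₜ[ℂ] y)‖ ≤ K * (‖x‖ * ‖y‖)) (v : V ⊗[ℂ] W) :
    ‖ψ v‖ ≤ K * projTensorSN (fun x : V => ‖x‖) (fun x : W => ‖x‖) v := by
  have list_bound : ∀ L : List (V × W),
      ‖ψ ((L.map fun p => p.1 ⊗ₜ[ℂ] p.2).sum)‖ ≤ K * (L.map fun p => ‖p.1‖ * ‖p.2‖).sum := by
    intro L
    induction L with
    | nil => simp
    | cons p L ih =>
      simp only [List.map_cons, List.sum_cons, map_add, mul_add]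
      exact (norm_add_le _ _).trans (add_le_add (hb p.1 p.2) ih)
  set S : Set ℝ := {r : ℝ | ∃ L : List (V × W), v = (L.map fun p => p.1 ⊗ₜ[ℂ] p.2).sum ∧
      r = (L.map fun p => ‖p.1‖ * ‖p.2‖).sum} with hS
  obtain ⟨L₀, hL₀⟩ := exists_list_rep v
  have hmem : ((L₀.map fun p => ‖p.1‖ * ‖p.2‖).sum) ∈ S := ⟨L₀, hL₀, rfl⟩
  have key : ∀ r ∈ S, ‖ψ v‖ ≤ K * r := by
    rintro r ⟨L, hv, rfl⟩
    rw [hv]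
    exact list_bound L
  have hPS : projTensorSN (fun x : V => ‖x‖) (fun x : W => ‖x‖) v = sInf S := rfl
  rw [hPS]
  rcases eq_or_lt_of_le hK with hK0 | hKpos
  · have h0 := key _ hmem
    rw [← hK0] at h0 ⊢
    simpa using h0
  · have hdiv : ‖ψ v‖ / K ≤ sInf S := by
      refine le_csInf ⟨_, hmem⟩ (fun r hr => ?_)
      rw [div_le_iff₀ hKpos]
      calc ‖ψ v‖ ≤ K * r := key r hr
        _ = r * K := mul_comm _ _
    calc ‖ψ v‖ = (‖ψ v‖ / K) * K := by field_simp
      _ ≤ sInf S * K := mul_le_mul_of_nonneg_right hdiv hK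
      _ = K * sInf S := mul_comm _ _

/-- If `A` is an abelian Banach algebra that is pseudo-amenable, then `A` is
weakly amenable. -/
theorem abelian_pseudoAmenable_implies_weaklyAmenable [CompleteSpace A]
    (hcomm : ∀ a b : A, a * b = b * a) (h : PseudoAmenable A) : WeaklyAmenable A := by
  unfold PseudoAmenable PseudoAmenableSN at h
  obtain ⟨ι, φ, u, hne, hcm, hpi⟩ := h
  haveI : φ.NeBot := hne
  intro D hD
  ext a c
  show D a c = 0
  -- the bilinear functional (x, y) ↦ D x (y * c), lifted to the tensor product
  set B : A →ₗ[ℂ] A →ₗ[ℂ] ℂ :=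
    { toFun := fun x => ((D x).toLinearMap).comp (LinearMap.mulRight ℂ c)
      map_add' := by intro x y; ext z; simp
      map_smul' := by intro s x; ext z; simp } with hB
  set Φ : A ⊗[ℂ] A →ₗ[ℂ] ℂ := TensorProduct.lift B with hΦ
  have hΦtmul : ∀ (x y : A), Φ (x ⊗ₜ[ℂ] y) = D x (y * c) := fun x y => rfl
  have hdl : ∀ (b : A) (ψ : A →L[ℂ] ℂ) (ξ : A), ((regularBimod A).dual.l b ψ) ξ = ψ (ξ * b) :=
    fun b ψ ξ => rfl
  have hdr : ∀ (b : A) (ψ : A →L[ℂ] ℂ) (ξ : A), ((regularBimod A).dual.r b ψ) ξ = ψ (b * ξ) :=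
    fun b ψ ξ => rfl
  -- the key algebraic identity
  have key : ∀ v : A ⊗[ℂ] A, Φ (tactL A a v) - Φ (tactR A a v) = D a (tpi A v * c) := by
    intro v
    induction v using TensorProduct.induction_on with
    | zero => simp [tactL, tactR, tpi]
    | tmul x y =>
      have h1 : tactL A a (x ⊗ₜ[ℂ] y) = (a * x) ⊗ₜ[ℂ] y := by
        simp [tactL]
      have h2 : tactR A a (x ⊗ₜ[ℂ] y) = x ⊗ₜ[ℂ] (y * a) := by
        simp [tactR]
      have h3 : tpi A (x ⊗ₜ[ℂ] y) = x * y := by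
        simp [tpi]
      rw [h1, h2, h3, hΦtmul, hΦtmul]
      have hDax : D (a * x) (y * c) = D x ((y * c) * a) + D a (x * (y * c)) := by
        rw [hD a x]
        rfl
      have e1 : (y * c) * a = (y * a) * c := by
        rw [mul_assoc, mul_assoc, hcomm c a]
      have e2 : x * (y * c) = (x * y) * c := (mul_assoc x y c).symm
      rw [hDax, e1, e2]
      abel
    | add u w hu hw =>
      simp only [map_add, add_mul]
      rw [← hu, ← hw]
      ring
  -- the bound on Φ
  have hbound : ∀ v : A ⊗[ℂ] A,
      ‖Φ v‖ ≤ (‖D‖ * ‖c‖) * projTensorSN (fun x : A => ‖x‖) (fun x : A => ‖x‖) v := by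
    intro v
    refine lift_le_projTensorSN Φ (‖D‖ * ‖c‖) (by positivity) (fun x y => ?_) v
    rw [hΦtmul]
    calc ‖D x (y * c)‖ ≤ ‖D x‖ * ‖y * c‖ := (D x).le_opNorm _
      _ ≤ (‖D‖ * ‖x‖) * (‖y‖ * ‖c‖) := by
          refine mul_le_mul (D.le_opNorm x) (norm_mul_le y c) (norm_nonneg _) (by positivity)
      _ = (‖D‖ * ‖c‖) * (‖x‖ * ‖y‖) := by ring
  -- first limit : D a (tpi (u i) * c) → 0
  have lim1 : Tendsto (fun i => D a (tpi A (u i) * c)) φ (𝓝 0) := by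
    have hsq : ∀ i, ‖D a (tpi A (u i) * c)‖ ≤
        (‖D‖ * ‖c‖) * projTensorSN (fun x : A => ‖x‖) (fun x : A => ‖x‖)
          (tactL A a (u i) - tactR A a (u i)) := by
      intro i
      rw [← key (u i)]
      have := hbound (tactL A a (u i) - tactR A a (u i))
      rwa [map_sub] at this
    have hg : Tendsto (fun i => (‖D‖ * ‖c‖) * projTensorSN (fun x : A => ‖x‖)
        (fun x : A => ‖x‖) (tactL A a (u i) - tactR A a (u i))) φ (𝓝 0) := by
      simpa using (hcm a).const_mul (‖D‖ * ‖c‖)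
    exact squeeze_zero_norm hsq hg
  -- second limit : D a (tpi (u i) * c) → D a c
  have lim2 : Tendsto (fun i => D a (tpi A (u i) * c)) φ (𝓝 (D a c)) := by
    have hc : Tendsto (fun i => tpi A (u i) * c) φ (𝓝 c) := by
      rw [tendsto_iff_norm_sub_tendsto_zero]
      exact hpi c
    exact ((D a).continuous.tendsto c).comp hc
  exact tendsto_nhds_unique lim2 lim1

end
end

section
/- If a Banach algebra A is pseudo-amenable, then A has a two-sided approximate identity. -/
open Filter Topology TensorProduct

section Aux

variable {A : Type} [NonUnitalNormedRing A] [NormedSpace ℂ A]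
  [IsScalarTower ℂ A A] [SMulCommClass ℂ A A]

lemma exists_list_repr (t : A ⊗[ℂ] A) :
    ∃ L : List (A × A), t = (L.map fun p => p.1 ⊗ₜ[ℂ] p.2).sum := by
  induction t with
  | zero => exact ⟨[], by simp⟩
  | tmul a b => exact ⟨[(a, b)], by simp⟩
  | add x y hx hy =>
    obtain ⟨L1, h1⟩ := hx
    obtain ⟨L2, h2⟩ := hy
    exact ⟨L1 ++ L2, by simp [h1, h2]⟩

lemma tpi_tactL (a : A) (t : A ⊗[ℂ] A) : tpi A (tactL A a t) = a * tpi A t := by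
  induction t with
  | zero => simp
  | tmul x y => simp [tpi, tactL, mul_assoc]
  | add x y hx hy => simp [map_add, hx, hy, mul_add]

lemma tpi_tactR (a : A) (t : A ⊗[ℂ] A) : tpi A (tactR A a t) = tpi A t * a := by
  induction t with
  | zero => simp
  | tmul x y => simp [tpi, tactR, mul_assoc]
  | add x y hx hy => simp [map_add, hx, hy, add_mul]

lemma norm_tpi_le (t : A ⊗[ℂ] A) :
    ‖tpi A t‖ ≤ projTensorSN (fun x : A => ‖x‖) (fun x : A => ‖x‖) t := by
  apply le_csInf
  · obtain ⟨L, hL⟩ := exists_list_repr t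
    exact ⟨_, L, hL, rfl⟩
  · rintro r ⟨L, ht, rfl⟩
    have h1 : tpi A t = (L.map fun p => p.1 * p.2).sum := by
      rw [ht, map_list_sum]
      congr 1
      simp [List.map_map, Function.comp_def, tpi]
    rw [h1]
    clear h1 ht
    induction L with
    | nil => simp
    | cons p L ih =>
      simp only [List.map_cons, List.sum_cons]
      exact (norm_add_le _ _).trans (add_le_add (norm_mul_le _ _) ih)

end Aux

/-- If a Banach algebra `A` is pseudo-amenable, then `A` has a two-sided
approximate identity. -/
theorem pseudoAmenable_implies_hasApproxIdentity
    (A : Type) [NonUnitalNormedRing A] [NormedSpace ℂ A]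
    [IsScalarTower ℂ A A] [SMulCommClass ℂ A A] [CompleteSpace A]
    (h : PseudoAmenable A) : HasApproxIdentity A := by
  obtain ⟨ι, φ, u, hφ, hcomm, hid⟩ := h
  refine ⟨ι, φ, fun i => tpi A (u i), hφ, fun a => ?_⟩
  have hR : Tendsto (fun i => tpi A (u i) * a) φ (𝓝 a) := by
    rw [tendsto_iff_norm_sub_tendsto_zero]
    exact hid a
  refine ⟨hR, ?_⟩
  have hdiff : Tendsto (fun i => a * tpi A (u i) - tpi A (u i) * a) φ (𝓝 0) := by
    rw [tendsto_zero_iff_norm_tendsto_zero]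
    refine squeeze_zero (fun i => norm_nonneg _) (fun i => ?_) (hcomm a)
    have : a * tpi A (u i) - tpi A (u i) * a = tpi A (tactL A a (u i) - tactR A a (u i)) := by
      rw [map_sub, tpi_tactL, tpi_tactR]
    rw [this]
    exact norm_tpi_le _
  have := hdiff.add hR
  simpa using this
end
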